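/- For every natural number n ≥ 1, the triangular snake graph TS_n is Perrin cordial if and only if n ≢ 2 (mod 4). -/

import Mathlib

/-- The reindexed Perrin sequence: `P 0 = 0`, `P 1 = 3`, `P 2 = 0`, `P 3 = 2`,
and `P n = P (n-2) + P (n-3)` thereafter
(so `P 4 = 3`, `P 5 = 2`, `P 6 = 5`, ...). -/
def perrin : ℕ → ℕ
  | 0 => 0
  | 1 => 3
  | 2 => 0
  | 3 => 2
  | n + 4 => perrin (n + 2) + perrin (n + 1)

/-- The induced edge label: `f` assigns to each vertex the index of a Perrin number,
and an edge `uv` gets the label `(P (f u) + P (f v)) mod 2`. -/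
def perrinEdgeLabel {V : Type*} (f : V → ℕ) : Sym2 V → ℕ :=
  Sym2.lift ⟨fun u v => (perrin (f u) + perrin (f v)) % 2, fun u v => by simp [Nat.add_comm]⟩

/-- `eCount G f i` is the number of edges of `G` whose induced label under `f` is `i`. -/
noncomputable def eCount {V : Type*} (G : SimpleGraph V) (f : V → ℕ) (i : ℕ) : ℕ :=
  {e | e ∈ G.edgeSet ∧ perrinEdgeLabel f e = i}.ncard

/-- A finite simple graph `G` on `N` vertices is Perrin cordial if there is an injective
labeling of its vertices by indices in `{0, 1, ..., N}` such that the numbers of edges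
with induced label `0` and `1` differ by at most `1`. -/
def IsPerrinCordial {V : Type*} [Fintype V] (G : SimpleGraph V) : Prop :=
  ∃ f : V → Fin (Fintype.card V + 1), Function.Injective f ∧
    |(eCount G (fun v => (f v : ℕ)) 0 : ℤ) - (eCount G (fun v => (f v : ℕ)) 1 : ℤ)| ≤ 1

/-- The triangular snake graph `TS n`: a path `v 1, ..., v (n+1)` (the `Sum.inl` vertices)
together with, for each `1 ≤ i ≤ n`, a vertex `u i` (a `Sum.inr` vertex) adjacent to
both `v i` and `v (i+1)`. -/
def triangularSnake (n : ℕ) : SimpleGraph (Fin (n + 1) ⊕ Fin n) :=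
  SimpleGraph.fromRel (fun a b =>
    match a, b with
    | Sum.inl i, Sum.inl j => i.val + 1 = j.val
    | Sum.inr i, Sum.inl j => j.val = i.val ∨ j.val = i.val + 1
    | _, _ => False)

lemma perrin_add4 (j : ℕ) : perrin (j + 4) = perrin (j + 2) + perrin (j + 1) := rfl

lemma perrin_mod2_add7 : ∀ k, 1 ≤ k → perrin (k + 7) % 2 = perrin k % 2 := by
  intro k
  induction k using Nat.strong_induction_on with
  | _ k ih =>
    intro hk
    match k, hk with
    | 1, _ => decide
    | 2, _ => decide
    | 3, _ => decide
    | (j+4), _ =>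
      have h1 : perrin (j + 9) % 2 = perrin (j + 2) % 2 := by
        simpa [show j + 2 + 7 = j + 9 by omega] using ih (j+2) (by omega) (by omega)
      have h2 : perrin (j + 8) % 2 = perrin (j + 1) % 2 := by
        simpa [show j + 1 + 7 = j + 8 by omega] using ih (j+1) (by omega) (by omega)
      have e1 : perrin (j + 4 + 7) = perrin (j + 9) + perrin (j + 8) := by
        rw [show j + 4 + 7 = (j + 7) + 4 by omega, perrin_add4]
      have e2 : perrin (j + 4) = perrin (j + 2) + perrin (j + 1) := perrin_add4 j
      omega

def Ocard (N : ℕ) : ℕ := ((Finset.range N).filter (fun k => perrin k % 2 = 1)).card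

lemma window_sum (N : ℕ) (hN : 1 ≤ N) :
    ∑ j ∈ Finset.range 7, perrin (N + j) % 2 = 4 := by
  induction N, hN using Nat.le_induction with
  | base => decide
  | succ N hN ih =>
    have hper := perrin_mod2_add7 N hN
    rw [Finset.sum_range_succ'] at ih
    rw [Finset.sum_range_succ]
    rw [show N + 1 + 6 = N + 7 by omega, hper]
    simp only [show ∀ j, N + 1 + j = N + (j+1) from fun j => by omega, Nat.add_zero] at *
    omega

lemma Ocard_step (N : ℕ) (hN : 1 ≤ N) : Ocard (N + 7) = Ocard N + 4 := by
  unfold Ocard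
  rw [show N + 7 = N + 7 from rfl, Finset.range_add, Finset.filter_union,
    Finset.card_union_of_disjoint]
  · congr 1
    rw [Finset.card_filter]
    rw [Finset.sum_map]
    have : ∀ j ∈ Finset.range 7,
        (if perrin ((addLeftEmbedding N) j) % 2 = 1 then 1 else 0) = perrin (N + j) % 2 := by
      intro j _
      simp only [addLeftEmbedding_apply]
      rcases Nat.mod_two_eq_zero_or_one (perrin (N + j)) with h | h <;> simp [h]
    rw [Finset.sum_congr rfl this, window_sum N hN]
  · exact (Finset.disjoint_filter_filter (Finset.disjoint_left.2 (by
      intro a ha hb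
      simp only [Finset.mem_range, Finset.mem_map, addLeftEmbedding_apply] at ha hb
      omega)))

def dd : ℕ → ℕ
  | 0 => 0 | 1 => 1 | 2 => 1 | 3 => 1 | 4 => 2 | 5 => 2 | _ => 3

lemma Ocard_formula : ∀ N, 1 ≤ N → Ocard N = 4 * ((N-1)/7) + dd ((N-1)%7) := by
  intro N
  induction N using Nat.strong_induction_on with
  | _ N ih =>
    intro hN
    rcases lt_or_ge N 8 with h | h
    · interval_cases N <;> decide
    · have h7 : N - 7 + 7 = N := by omega
      have := Ocard_step (N - 7) (by omega)
      rw [h7] at this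
      rw [this, ih (N-7) (by omega) (by omega)]
      have e1 : (N - 1) / 7 = (N - 7 - 1)/7 + 1 := by omega
      have e2 : (N - 1) % 7 = (N - 7 - 1) % 7 := by omega
      rw [e1, e2]
      ring


open Finset

abbrev VS (n : ℕ) := Fin (n + 1) ⊕ Fin n

def tri (n : ℕ) (i : Fin n) : Finset (Sym2 (VS n)) :=
  {s(.inl i.castSucc, .inl i.succ), s(.inr i, .inl i.castSucc), s(.inr i, .inl i.succ)}

def ES (n : ℕ) : Finset (Sym2 (VS n)) := univ.biUnion (tri n)

lemma snake_adj {n : ℕ} (a b : VS n) : (triangularSnake n).Adj a b ↔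
    (∃ i j : Fin (n+1), a = .inl i ∧ b = .inl j ∧ (i.val + 1 = j.val ∨ j.val + 1 = i.val)) ∨
    (∃ (i : Fin n) (j : Fin (n+1)), ((a = .inr i ∧ b = .inl j) ∨ (a = .inl j ∧ b = .inr i)) ∧
      (j.val = i.val ∨ j.val = i.val + 1)) := by
  rw [triangularSnake, SimpleGraph.fromRel_adj]
  constructor
  · rintro ⟨hne, h | h⟩ <;> rcases a with i | i <;> rcases b with j | j <;>
      simp only [] at h <;> first
      | exact Or.inl ⟨i, j, rfl, rfl, by omega⟩
      | exact Or.inl ⟨j, i, rfl, rfl, by omega⟩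
      | exact Or.inr ⟨i, j, Or.inl ⟨rfl, rfl⟩, h⟩
      | exact Or.inr ⟨j, i, Or.inr ⟨rfl, rfl⟩, h⟩
      | exact absurd h not_false
  · rintro (⟨i, j, rfl, rfl, h | h⟩ | ⟨i, j, (⟨rfl, rfl⟩ | ⟨rfl, rfl⟩), h⟩)
    · exact ⟨by simp [Fin.ext_iff]; omega, Or.inl h⟩
    · exact ⟨by simp [Fin.ext_iff]; omega, Or.inr h⟩
    · exact ⟨by simp, Or.inl h⟩
    · exact ⟨by simp, Or.inr h⟩

lemma mem_tri {n : ℕ} (i : Fin n) (e : Sym2 (VS n)) :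
    e ∈ tri n i ↔ e = s(.inl i.castSucc, .inl i.succ) ∨ e = s(.inr i, .inl i.castSucc) ∨
      e = s(.inr i, .inl i.succ) := by
  simp [tri]

lemma edgeSet_eq (n : ℕ) : (triangularSnake n).edgeSet = ↑(ES n) := by
  ext e
  induction e with
  | _ a b =>
    rw [SimpleGraph.mem_edgeSet, snake_adj]
    simp only [ES, coe_biUnion, Set.mem_iUnion, mem_coe, coe_univ, Set.mem_univ, true_and]
    constructor
    · rintro (⟨i, j, rfl, rfl, h | h⟩ | ⟨i, j, (⟨rfl, rfl⟩ | ⟨rfl, rfl⟩), h | h⟩)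
      · exact ⟨⟨i, by omega⟩, trivial, by simp [mem_tri, Sym2.eq_iff, Fin.ext_iff]; omega⟩
      · exact ⟨⟨j, by omega⟩, trivial, by simp [mem_tri, Sym2.eq_iff, Fin.ext_iff]; omega⟩
      · exact ⟨i, trivial, by simp [mem_tri, Sym2.eq_iff, Fin.ext_iff]; omega⟩
      · exact ⟨i, trivial, by simp [mem_tri, Sym2.eq_iff, Fin.ext_iff]; omega⟩
      · exact ⟨i, trivial, by simp [mem_tri, Sym2.eq_iff, Fin.ext_iff]; omega⟩
      · exact ⟨i, trivial, by simp [mem_tri, Sym2.eq_iff, Fin.ext_iff]; omega⟩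
    · rintro ⟨i, -, hi⟩
      rw [mem_tri] at hi
      rcases hi with h | h | h <;> rw [Sym2.eq_iff] at h <;>
        rcases h with ⟨rfl, rfl⟩ | ⟨rfl, rfl⟩
      · exact Or.inl ⟨_, _, rfl, rfl, Or.inl (by simp)⟩
      · exact Or.inl ⟨_, _, rfl, rfl, Or.inr (by simp)⟩
      · exact Or.inr ⟨i, _, Or.inl ⟨rfl, rfl⟩, Or.inl (by simp)⟩
      · exact Or.inr ⟨i, _, Or.inr ⟨rfl, rfl⟩, Or.inl (by simp)⟩
      · exact Or.inr ⟨i, _, Or.inl ⟨rfl, rfl⟩, Or.inr (by simp)⟩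
      · exact Or.inr ⟨i, _, Or.inr ⟨rfl, rfl⟩, Or.inr (by simp)⟩

lemma tri_pairwise {n : ℕ} : ∀ i ∈ (univ : Finset (Fin n)), ∀ j ∈ univ, i ≠ j →
    Disjoint (tri n i) (tri n j) := by
  intro i _ j _ hij
  rw [Finset.disjoint_left]
  intro e hei hej
  apply hij
  rw [mem_tri] at hei hej
  rcases hei with h | h | h <;> subst h <;>
    simp only [mem_tri, Sym2.eq_iff] at hej <;>
    ext <;>
    rcases hej with (⟨h1, h2⟩|⟨h1, h2⟩) | (⟨h1, h2⟩|⟨h1, h2⟩) | (⟨h1, h2⟩|⟨h1, h2⟩) <;>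
    simp_all [Fin.ext_iff] <;> omega

lemma tri_card {n : ℕ} (i : Fin n) : (tri n i).card = 3 := by
  rw [tri, card_insert_of_notMem (by simp [Sym2.eq_iff, Fin.ext_iff] <;> omega),
    card_insert_of_notMem (by simp [Sym2.eq_iff, Fin.ext_iff] <;> omega), card_singleton]

lemma ES_card (n : ℕ) : (ES n).card = 3 * n := by
  rw [ES, card_biUnion tri_pairwise]
  simp [tri_card, mul_comm]

lemma perrinEdgeLabel_mk {V : Type*} (f : V → ℕ) (x y : V) :
    perrinEdgeLabel f s(x, y) = (perrin (f x) + perrin (f y)) % 2 := rfl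

open Classical in
lemma eCount_eq (n : ℕ) (f : VS n → ℕ) (i : ℕ) :
    eCount (triangularSnake n) f i = ((ES n).filter (fun e => perrinEdgeLabel f e = i)).card := by
  rw [eCount, ← Set.ncard_coe_finset]
  congr 1
  rw [Finset.coe_filter]
  ext e
  simp [edgeSet_eq n]

open Classical in
lemma eCount_add (n : ℕ) (f : VS n → ℕ) :
    eCount (triangularSnake n) f 0 + eCount (triangularSnake n) f 1 = 3 * n := by
  have key : ∀ e ∈ ES n, perrinEdgeLabel f e = 0 ∨ perrinEdgeLabel f e = 1 := by
    intro e _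
    induction e with
    | _ x y => rw [perrinEdgeLabel_mk]; omega
  have h3 := Finset.card_filter_add_card_filter_not
    (s := ES n) (p := fun e => perrinEdgeLabel f e = 0)
  have h2 : (ES n).filter (fun a => ¬ perrinEdgeLabel f a = 0) =
      (ES n).filter (fun e => perrinEdgeLabel f e = 1) :=
    Finset.filter_congr (fun e he => by rcases key e he with h | h <;> simp [h])
  rw [h2] at h3
  rw [eCount_eq, eCount_eq, ← ES_card n, ← h3]

open Classical in
lemma eCount_one_eq_sum (n : ℕ) (f : VS n → ℕ) :
    eCount (triangularSnake n) f 1 =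
      ∑ i : Fin n, ((tri n i).filter (fun e => perrinEdgeLabel f e = 1)).card := by
  rw [eCount_eq, ES, Finset.filter_biUnion, card_biUnion]
  intro i hi j hj hij
  exact Finset.disjoint_filter_filter (tri_pairwise i hi j hj hij)

lemma tri_filter_card {n : ℕ} (f : VS n → ℕ) (i : Fin n) :
    ((tri n i).filter (fun e => perrinEdgeLabel f e = 1)).card =
      (if (perrin (f (.inl i.castSucc)) + perrin (f (.inl i.succ))) % 2 = 1 then 1 else 0)
      + (if (perrin (f (.inr i)) + perrin (f (.inl i.castSucc))) % 2 = 1 then 1 else 0)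
      + (if (perrin (f (.inr i)) + perrin (f (.inl i.succ))) % 2 = 1 then 1 else 0) := by
  classical
  have hne1 : s(.inl i.castSucc, .inl i.succ) ∉
      ({s(.inr i, .inl i.castSucc), s(.inr i, .inl i.succ)} : Finset (Sym2 (VS n))) := by
    simp [Sym2.eq_iff]
  have hne2 : s(.inr i, .inl i.castSucc) ∉ ({s(.inr i, .inl i.succ)} : Finset (Sym2 (VS n))) := by
    simp [Sym2.eq_iff, Fin.ext_iff] <;> omega
  rw [tri, Finset.card_filter, Finset.sum_insert hne1, Finset.sum_insert hne2,
    Finset.sum_singleton]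
  simp only [perrinEdgeLabel_mk]
  rw [add_assoc]
  rfl

lemma imposs (n : ℕ) (hn4 : n % 4 = 2) : ¬ IsPerrinCordial (triangularSnake n) := by
  rintro ⟨f, -, habs⟩
  set g : VS n → ℕ := fun v => (f v : ℕ) with hg
  have he1 : 2 ∣ eCount (triangularSnake n) g 1 := by
    rw [eCount_one_eq_sum]
    apply Finset.dvd_sum
    intro i _
    rw [tri_filter_card]
    split_ifs <;> omega
  have hadd := eCount_add n g
  obtain ⟨k, hk⟩ := he1
  rw [abs_le] at habs
  obtain ⟨h1, h2⟩ := habs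
  omega

-- counting lemmas
lemma sum_bv_aux (t M : ℕ) :
    ∑ j ∈ Finset.range (t + M), (if j < t then 1 else (j - t + 1) % 2) = t + (M+1)/2 := by
  induction M with
  | zero =>
    rw [Nat.add_zero]
    rw [Finset.sum_congr rfl (fun j hj => if_pos (Finset.mem_range.1 hj))]
    simp
  | succ M ih =>
    rw [show t + (M+1) = (t + M) + 1 by omega, Finset.sum_range_succ, ih,
      if_neg (by omega)]
    omega

lemma sum_if_lt (c N : ℕ) : ∑ j ∈ Finset.range N, (if j < c then (1:ℕ) else 0) = min c N := by
  induction N with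
  | zero => simp
  | succ N ih =>
    rw [Finset.sum_range_succ, ih]
    by_cases h : N < c <;> simp [h] <;> omega

lemma sum_if_lt0 (t N : ℕ) :
    ∑ j ∈ Finset.range N, (if j < t then (0:ℕ) else 2) = 2 * N - 2 * min t N := by
  induction N with
  | zero => simp
  | succ N ih =>
    rw [Finset.sum_range_succ, ih]
    by_cases h : N < t <;> simp [h] <;> omega

-- construction data
def mval (n : ℕ) : ℕ := (3*n+1)/4
def tval (n : ℕ) : ℕ := n - mval n
def OO (n : ℕ) : ℕ := Ocard (2*n+2)
def Kmin (n : ℕ) : ℕ := 2 * tval n + (mval n)/2 + 1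
def sval (n : ℕ) : ℕ := OO n - 1 - Kmin n
def Kval (n : ℕ) : ℕ := Kmin n + sval n

lemma feas (n : ℕ) (hn : 1 ≤ n) (hn4 : ¬ n % 4 = 2) :
    Kmin n ≤ OO n ∧ OO n ≤ Kmin n + mval n + 1 := by
  have hO : OO n = 4 * ((2*n+1)/7) + dd ((2*n+1)%7) := by
    have := Ocard_formula (2*n+2) (by omega)
    simpa [OO, show 2*n+2-1 = 2*n+1 by omega] using this
  have hr : (2*n+1)%7 = 0 ∨ (2*n+1)%7 = 1 ∨ (2*n+1)%7 = 2 ∨ (2*n+1)%7 = 3 ∨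
      (2*n+1)%7 = 4 ∨ (2*n+1)%7 = 5 ∨ (2*n+1)%7 = 6 := by omega
  simp only [Kmin, tval, mval] at *
  rcases hr with h | h | h | h | h | h | h <;> rw [h] at hO <;> simp only [dd] at hO <;>
    (try omega) <;>
    rcases (by omega : n % 8 = 0 ∨ n % 8 = 1 ∨ n % 8 = 2 ∨ n % 8 = 3 ∨ n % 8 = 4 ∨
      n % 8 = 5 ∨ n % 8 = 6 ∨ n % 8 = 7) with h8|h8|h8|h8|h8|h8|h8|h8 <;> omega

lemma sval_le (n : ℕ) (hn : 1 ≤ n) (hn4 : ¬ n % 4 = 2) : sval n ≤ mval n := by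
  have := feas n hn hn4
  unfold sval
  omega

lemma Kval_bounds (n : ℕ) (hn : 1 ≤ n) (hn4 : ¬ n % 4 = 2) :
    OO n - 1 ≤ Kval n ∧ Kval n ≤ OO n ∧ 1 ≤ OO n := by
  have := feas n hn hn4
  unfold Kval sval
  have h1 : 1 ≤ OO n := by
    have h := Ocard_step 1 (le_refl 1)
    have : OO n = Ocard (2*n+2) := rfl
    -- OO n ≥ ... easier: Kmin n ≥ 1
    unfold Kmin at *
    omega
  unfold Kmin at *
  omega

def bvf (n : ℕ) (j : ℕ) : ℕ := if j < tval n then 1 else (j - tval n + 1) % 2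
def buf (n : ℕ) (i : ℕ) : ℕ := if i < tval n + sval n then 1 else 0
def bb (n : ℕ) : VS n → ℕ := Sum.elim (fun j => bvf n j.val) (fun i => buf n i.val)

lemma bb_le (n : ℕ) (v : VS n) : bb n v = 0 ∨ bb n v = 1 := by
  rcases v with j | i <;> simp only [bb, Sum.elim_inl, Sum.elim_inr, bvf, buf] <;>
    split_ifs <;> omega

lemma mval_le (n : ℕ) (hn : 1 ≤ n) : mval n ≤ n := by unfold mval; omega

lemma bb_ones_card (n : ℕ) (hn : 1 ≤ n) (hn4 : ¬ n % 4 = 2) :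
    ((univ : Finset (VS n)).filter (fun v => bb n v = 1)).card = Kval n := by
  have hm := mval_le n hn
  have hs := sval_le n hn hn4
  rw [Finset.card_filter]
  rw [Fintype.sum_sum_type]
  have h1 : ∀ a : Fin (n+1), (if bb n (Sum.inl a) = 1 then (1:ℕ) else 0) =
      (if a.val < tval n then 1 else (a.val - tval n + 1) % 2) := by
    intro a
    by_cases h : a.val < tval n
    · simp [bb, bvf, h]
    · simp only [bb, Sum.elim_inl, bvf, if_neg h]
      rcases Nat.mod_two_eq_zero_or_one (a.val - tval n + 1) with h2 | h2 <;> simp [h2]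
  have h2 : ∀ a : Fin n, (if bb n (Sum.inr a) = 1 then (1:ℕ) else 0) =
      (if a.val < tval n + sval n then 1 else 0) := by
    intro a
    by_cases h : a.val < tval n + sval n <;> simp [bb, buf, h]
  rw [Finset.sum_congr rfl (fun a _ => h1 a), Finset.sum_congr rfl (fun a _ => h2 a)]
  rw [Fin.sum_univ_eq_sum_range (fun j => if j < tval n then 1 else (j - tval n + 1) % 2),
    Fin.sum_univ_eq_sum_range (fun j => if j < tval n + sval n then (1:ℕ) else 0)]
  have htv : tval n = n - mval n := rfl
  rw [show n + 1 = tval n + (mval n + 1) by omega, sum_bv_aux, sum_if_lt]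
  have hK : Kval n = 2 * tval n + (mval n)/2 + 1 + sval n := rfl
  omega

lemma bb_zeros_card (n : ℕ) (hn : 1 ≤ n) (hn4 : ¬ n % 4 = 2) :
    ((univ : Finset (VS n)).filter (fun v => ¬ bb n v = 1)).card = 2*n + 1 - Kval n := by
  have h := Finset.card_filter_add_card_filter_not
    (s := (univ : Finset (VS n))) (p := fun v => bb n v = 1)
  rw [bb_ones_card n hn hn4] at h
  have hcard : (univ : Finset (VS n)).card = 2*n+1 := by
    simp [Finset.card_univ]
    omega
  omega

def Lones (n : ℕ) : Finset ℕ := (Finset.range (2*n+2)).filter (fun k => perrin k % 2 = 1)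
def Lzeros (n : ℕ) : Finset ℕ := (Finset.range (2*n+2)).filter (fun k => ¬ perrin k % 2 = 1)

lemma Lones_card (n : ℕ) : (Lones n).card = OO n := rfl

lemma Lzeros_card (n : ℕ) : (Lzeros n).card = 2*n+2 - OO n := by
  have h := Finset.card_filter_add_card_filter_not
    (s := Finset.range (2*n+2)) (p := fun k => perrin k % 2 = 1)
  have h2 : (Finset.range (2*n+2)).card = 2*n+2 := by simp
  have := Lones_card n
  unfold Lones Lzeros at *
  omega

lemma main_construction (n : ℕ) (hn : 1 ≤ n) (hn4 : ¬ n % 4 = 2) :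
    IsPerrinCordial (triangularSnake n) := by
  classical
  obtain ⟨hK1, hK2, hO1⟩ := Kval_bounds n hn hn4
  -- choose label subsets
  obtain ⟨L1, hL1sub, hL1card⟩ := Finset.exists_subset_card_eq (show Kval n ≤ (Lones n).card
    by rw [Lones_card]; exact hK2)
  obtain ⟨L0, hL0sub, hL0card⟩ := Finset.exists_subset_card_eq (show 2*n+1 - Kval n ≤ (Lzeros n).card
    by rw [Lzeros_card]; omega)
  set A1 := (univ : Finset (VS n)).filter (fun v => bb n v = 1) with hA1
  set A0 := (univ : Finset (VS n)).filter (fun v => ¬ bb n v = 1) with hA0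
  have hA1card : A1.card = L1.card := by rw [bb_ones_card n hn hn4, hL1card]
  have hA0card : A0.card = L0.card := by rw [bb_zeros_card n hn hn4, hL0card]
  set eqv1 := A1.equivOfCardEq hA1card with heqv1
  set eqv0 := A0.equivOfCardEq hA0card with heqv0
  set F : VS n → ℕ := fun v =>
    if h : bb n v = 1 then (eqv1 ⟨v, by rw [hA1]; simp [h]⟩ : ℕ)
    else (eqv0 ⟨v, by rw [hA0]; simp [h]⟩ : ℕ) with hF
  have hFone : ∀ v, bb n v = 1 → F v ∈ L1 := by
    intro v h
    rw [hF]
    simp only [h, dif_pos]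
    exact Finset.coe_mem _
  have hFzero : ∀ v, ¬ bb n v = 1 → F v ∈ L0 := by
    intro v h
    rw [hF]
    simp only [h, dif_neg, not_false_iff]
    exact Finset.coe_mem _
  have hFlt : ∀ v, F v < 2*n+2 := by
    intro v
    by_cases h : bb n v = 1
    · have := hL1sub (hFone v h)
      unfold Lones at this
      exact Finset.mem_range.1 (Finset.mem_filter.1 this).1
    · have := hL0sub (hFzero v h)
      unfold Lzeros at this
      exact Finset.mem_range.1 (Finset.mem_filter.1 this).1
  have hFpar : ∀ v, perrin (F v) % 2 = bb n v := by
    intro v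
    by_cases h : bb n v = 1
    · have := hL1sub (hFone v h)
      unfold Lones at this
      rw [h]
      exact (Finset.mem_filter.1 this).2
    · have := hL0sub (hFzero v h)
      unfold Lzeros at this
      have h2 := (Finset.mem_filter.1 this).2
      rcases bb_le n v with h3 | h3
      · omega
      · exact absurd h3 h
  have hFinj : Function.Injective F := by
    intro x y hxy
    by_cases hx : bb n x = 1 <;> by_cases hy : bb n y = 1
    · rw [hF] at hxy
      simp only [hx, hy, dif_pos] at hxy
      have := eqv1.injective (Subtype.ext hxy)
      exact Subtype.ext_iff.1 this
    · exfalso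
      have h1 := hFpar x
      have h2 := hFpar y
      rcases bb_le n y with h3 | h3
      · rw [hxy] at h1; omega
      · exact hy h3
    · exfalso
      have h1 := hFpar x
      have h2 := hFpar y
      rcases bb_le n x with h3 | h3
      · rw [hxy] at h1; omega
      · exact hx h3
    · rw [hF] at hxy
      simp only [hx, hy, dif_neg, not_false_iff] at hxy
      have := eqv0.injective (Subtype.ext hxy)
      exact Subtype.ext_iff.1 this
  -- package into Fin
  have hcardVS : Fintype.card (VS n) = 2*n+1 := by
    simp
    omega
  refine ⟨fun v => ⟨F v, by rw [hcardVS]; exact hFlt v⟩, ?_, ?_⟩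
  · intro x y hxy
    apply hFinj
    exact congrArg Fin.val hxy
  · have hfv : (fun v : VS n => ((⟨F v, by rw [hcardVS]; exact hFlt v⟩ : Fin (Fintype.card (VS n) + 1)) : ℕ)) = F := rfl
    rw [hfv]
    have htv : tval n = n - mval n := rfl
    have hm := mval_le n hn
    have hs := sval_le n hn hn4
    have htri : ∀ i : Fin n, ((tri n i).filter (fun e => perrinEdgeLabel F e = 1)).card =
        if i.val < tval n then 0 else 2 := by
      intro i
      rw [tri_filter_card]
      by_cases hit : i.val < tval n
      · have e1 : perrin (F (Sum.inl i.castSucc)) % 2 = 1 := by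
          rw [hFpar]
          simp [bb, bvf, hit]
        have e2 : perrin (F (Sum.inl i.succ)) % 2 = 1 := by
          rw [hFpar]
          simp only [bb, Sum.elim_inl, bvf, Fin.val_succ]
          split_ifs <;> omega
        have e3 : perrin (F (Sum.inr i)) % 2 = 1 := by
          rw [hFpar]
          simp only [bb, Sum.elim_inr, buf]
          rw [if_pos (by omega)]
        split_ifs <;> omega
      · have e1 : perrin (F (Sum.inl i.castSucc)) % 2 = (i.val - tval n + 1) % 2 := by
          rw [hFpar]
          simp only [bb, Sum.elim_inl, bvf, Fin.coe_castSucc]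
          rw [if_neg hit]
        have e2 : perrin (F (Sum.inl i.succ)) % 2 = (i.val + 1 - tval n + 1) % 2 := by
          rw [hFpar]
          simp only [bb, Sum.elim_inl, bvf, Fin.val_succ]
          rw [if_neg (by omega)]
        have e3 : perrin (F (Sum.inr i)) % 2 = 0 ∨ perrin (F (Sum.inr i)) % 2 = 1 := by
          rw [hFpar]
          exact bb_le n _
        rcases e3 with e3 | e3 <;> split_ifs <;> omega
    have he1 : eCount (triangularSnake n) F 1 = 2 * mval n := by
      rw [eCount_one_eq_sum, Finset.sum_congr rfl (fun i _ => htri i),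
        Fin.sum_univ_eq_sum_range (fun j => if j < tval n then 0 else 2) n, sum_if_lt0]
      omega
    have hadd := eCount_add n F
    have hmdef : mval n = (3*n+1)/4 := rfl
    refine abs_le.2 ⟨?_, ?_⟩ <;> omega

/-- for `n ≥ 1`, the triangular snake `TS n` is Perrin cordial iff
`n ≢ 2 (mod 4)`. -/
theorem triangularSnake_isPerrinCordial_iff (n : ℕ) (hn : 1 ≤ n) :
    IsPerrinCordial (triangularSnake n) ↔ ¬ n % 4 = 2 := by
  constructor
  · intro h hc
    exact imposs n hc h
  · exact main_construction n hn
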